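/- For s ≥ 3, the group G_s = ⟨a, b, t | t⁻¹at = b, t⁻¹bt = W(b,a)·b·W(a,b)⁻¹⟩ with W(x,y) = xy⁴xy⁵x⋯xy^{4+s}x contains a subgroup that is locally free and not free. -/

import Mathlib

/-- The word `W(x,y) = x y⁴ x y⁵ x ⋯ x y^(4+s) x`. -/
def W {G : Type*} [Group G] (s : ℕ) (x y : G) : G :=
  x * (((List.range (s + 1)).map fun i => y ^ (4 + i) * x).prod)

/-- Generators: `0 = a`, `1 = b`, `2 = t`.  Relations of
`⟨a, b, t | t⁻¹at = b, t⁻¹bt = W(b,a)·b·W(a,b)⁻¹⟩`. -/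
def gsrels (s : ℕ) : Set (FreeGroup (Fin 3)) :=
  {(FreeGroup.of 2)⁻¹ * FreeGroup.of 0 * FreeGroup.of 2 * (FreeGroup.of 1)⁻¹,
   (FreeGroup.of 2)⁻¹ * FreeGroup.of 1 * FreeGroup.of 2 *
     (W s (FreeGroup.of 1) (FreeGroup.of 0) * FreeGroup.of 1 *
       (W s (FreeGroup.of 0) (FreeGroup.of 1))⁻¹)⁻¹}

/-!
The substitution `ρ : a ↦ b, b ↦ c` with `c = W(b,a)·b·W(a,b)⁻¹` is an injective endomorphism of
the free group `F₂ = ⟨a, b⟩`: the reduced word of `c` begins with `b a⁴` and ends with `b⁻⁴ a⁻¹`,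
so in any reduced product of `b^{±1}` and `c^{±1}` the leading letters survive all cancellation
(ping-pong). It is not surjective: on `ρ(F₂)` the exponent sum of `a` is a multiple of its
exponent sum in `c`, which is `∑_{i ≤ s} (4 + i) - (s + 2) ≥ 2`, so `a ∉ ρ(F₂)`.

The relations of `G_s` say `t⁻¹ g t = ρ g`, and `F₂` embeds in `G_s` because `G_s` maps to the
ascending HNN extension of `F₂` along `ρ`. Hence the conjugates `Aₙ = tⁿ F₂ t⁻ⁿ` form a strictly
increasing chain of free groups of rank two, and their union `H` is the required subgroup. A
finitely generated subgroup of `H` lies in some `Aₙ`, so it is free. If `H` were free, every finite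
set of free generators of `H` would lie in a two-generator subgroup, so after abelianizing there
are at most two of them; then `H` is finitely generated, hence lies in some `Aₙ`, and the chain
stops.
-/

namespace FreeGroup

variable {α : Type*} {L M : List (α × Bool)}

theorem isReduced_of_forall_snd_eq_true (h : ∀ x ∈ L, x.2 = true) : IsReduced L :=
  (List.pairwise_of_forall_mem_list fun x hx y hy (_ : x.1 = y.1) =>
    (h x hx).trans (h y hy).symm).isChain

theorem IsReduced.append (hL : IsReduced L) (hM : IsReduced M)
    (h : ∀ x ∈ L.getLast?, ∀ y ∈ M.head?, x.1 = y.1 → x.2 = y.2) : IsReduced (L ++ M) :=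
  List.isChain_append.2 ⟨hL, hM, h⟩

variable [DecidableEq α]

theorem IsReduced.toWord_mk (h : IsReduced L) : (mk L).toWord = L :=
  FreeGroup.toWord_mk.trans h.reduce_eq

theorem toWord_mk_mul {x : FreeGroup α} (h : IsReduced (L ++ x.toWord)) :
    (mk L * x).toWord = L ++ x.toWord := by
  rw [← h.toWord_mk, ← mul_mk, mk_toWord]

theorem toWord_inv_mk_mul {x : FreeGroup α} (h : x.toWord = L ++ M) :
    ((mk L)⁻¹ * x).toWord = M := by
  have hM : IsReduced M := isReduced_toWord.infix (h ▸ (List.suffix_append L M).isInfix)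
  rw [← mk_toWord (x := x), h, ← mul_mk, inv_mul_cancel_left, hM.toWord_mk]

theorem toWord_mk_replicate_mul {y : α × Bool} (n : ℕ) {x : FreeGroup α}
    (hx : ¬ [(y.1, !y.2)] <+: x.toWord) :
    (mk (List.replicate n y) * x).toWord = List.replicate n y ++ x.toWord := by
  refine toWord_mk_mul ((List.isChain_replicate_of_rel n fun _ => rfl).append isReduced_toWord ?_)
  rintro a ha ⟨z₁, z₂⟩ hz rfl
  obtain rfl : a = y := List.eq_of_mem_replicate (List.mem_of_mem_getLast? ha)
  by_contra hne
  obtain rfl : z₂ = !a.2 := Bool.eq_not.2 (Ne.symm hne)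
  exact hx (List.singleton_prefix_iff_head?_eq_some.2 hz)

theorem head?_toWord_mk_replicate_mul {y : α × Bool} (n : ℕ) {x : FreeGroup α}
    (hx : ¬ List.replicate (n + 1) (y.1, !y.2) <+: x.toWord) :
    (mk (List.replicate (n + 1) y) * x).toWord.head? = some y := by
  induction n generalizing x with
  | zero =>
    rw [toWord_mk_replicate_mul _ hx]
    rfl
  | succ n ih =>
    by_cases hy : [(y.1, !y.2)] <+: x.toWord
    · obtain ⟨w, hw⟩ := hy
      have hcancel : mk (List.replicate (n + 2) y) * x =
          mk (List.replicate (n + 1) y) * ((mk [(y.1, !y.2)])⁻¹ * x) := by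
        rw [inv_mk, List.replicate_succ', ← mul_mk, mul_assoc]
        simp [invRev]
      rw [hcancel]
      refine ih fun h => hx ?_
      rw [toWord_inv_mk_mul hw.symm] at h
      exact hw ▸ List.cons_prefix_cons.2 ⟨rfl, h⟩
    · rw [toWord_mk_replicate_mul _ hy]
      rfl

/-- At most `n` of the trailing letters `(i, false)` of `g` cancel against `x`, so `Q` survives. -/
theorem isPrefix_toWord_mul {i j : α} {n : ℕ} {Q : List (α × Bool)} {g x : FreeGroup α}
    (hg : g.toWord = Q ++ List.replicate (n + 1) (i, false) ++ [(j, false)])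
    (hx : ¬ (j, true) :: List.replicate n (i, true) <+: x.toWord) :
    Q <+: (g * x).toWord := by
  set x' := mk [(j, false)] * x
  have hx' : ¬ List.replicate (n + 1) (i, true) <+: x'.toWord := by
    by_cases hy : [(j, true)] <+: x.toWord
    · obtain ⟨w, hw⟩ := hy
      have : x' = (mk [(j, true)])⁻¹ * x := by simp [x', inv_mk, invRev]
      rw [this, toWord_inv_mk_mul hw.symm]
      refine fun h => hx (hw ▸ List.cons_prefix_cons.2 ⟨rfl, ?_⟩)
      exact (List.prefix_append _ _).trans (List.replicate_succ' .. ▸ h)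
    · rw [show x' = mk (List.replicate 1 (j, false)) * x from rfl,
        toWord_mk_replicate_mul 1 hy]
      simp [List.replicate_succ]
  have he := head?_toWord_mk_replicate_mul (y := (i, false)) n hx'
  have hg' : g.toWord = (Q ++ [(i, false)]) ++ (List.replicate n (i, false) ++ [(j, false)]) := by
    simp [hg, List.replicate_succ]
  have hQ : IsReduced (Q ++ [(i, false)]) :=
    isReduced_toWord.infix (hg' ▸ List.infix_append [] _ _)
  have hsplit : g = mk Q * mk (List.replicate (n + 1) (i, false)) * mk [(j, false)] := by
    rw [← mk_toWord (x := g), hg, mul_mk, mul_mk]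
  rw [hsplit, mul_assoc, mul_assoc, toWord_mk_mul]
  · exact List.prefix_append _ _
  refine (hQ.infix (List.prefix_append _ _).isInfix).append isReduced_toWord fun a ha b hb => ?_
  rw [show mk [(j, false)] * x = x' from rfl, he] at hb
  cases hb
  exact List.isChain_append.1 hQ |>.2.2 a ha _ rfl

def prefixedBy (p : List (α × Bool)) : Set (FreeGroup α) := {g | p <+: g.toWord}

theorem prefixedBy_anti {p q : List (α × Bool)} (h : p <+: q) : prefixedBy q ⊆ prefixedBy p :=
  fun _ hg => h.trans hg

theorem disjoint_prefixedBy {p q : List (α × Bool)} (h : ¬ p <+: q) (h' : ¬ q <+: p) :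
    Disjoint (prefixedBy p) (prefixedBy q) :=
  Set.disjoint_left.2 fun _ hp hq => (List.prefix_or_prefix_of_prefix hp hq).elim h h'

end FreeGroup

section W

variable {G : Type*} [Group G]

theorem W_succ (s : ℕ) (x y : G) : W (s + 1) x y = W s x y * (y ^ (5 + s) * x) := by
  simp only [W, List.range_succ (n := s + 1), List.map_append, List.prod_append, mul_assoc]
  simp [Nat.add_comm 4, Nat.add_comm 5]

theorem map_W {H : Type*} [Group H] (f : G →* H) (s : ℕ) (x y : G) :
    f (W s x y) = W s (f x) (f y) := by
  simp [W, map_list_prod, Function.comp_def]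

theorem W_eq_of_comm {A : Type*} [CommGroup A] (s : ℕ) (x y : A) :
    W s x y = x ^ (s + 2) * y ^ ∑ i ∈ Finset.range (s + 1), (4 + i) := by
  induction s with
  | zero =>
    simp only [W, zero_add, List.range_one, List.map_singleton, List.prod_singleton, pow_two]
    ac_rfl
  | succ s ih =>
    rw [W_succ, ih, Finset.sum_range_succ _ (s + 1), pow_succ x (s + 2),
      show 4 + (s + 1) = 5 + s by omega, pow_add y _ (5 + s)]
    ac_rfl

theorem FreeGroup.exists_toWord_W {α : Type*} [DecidableEq α] (s : ℕ) (x y : α) :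
    ∃ R : List (α × Bool), (∀ z ∈ R, z.2 = true) ∧
      (W s (of x) (of y)).toWord = (x, true) :: List.replicate 4 (y, true) ++ R ++ [(x, true)] := by
  suffices ∃ R : List (α × Bool), (∀ z ∈ R, z.2 = true) ∧
      W s (of x) (of y) = mk ((x, true) :: List.replicate 4 (y, true) ++ R ++ [(x, true)]) by
    obtain ⟨R, hR, hW⟩ := this
    refine ⟨R, hR, hW ▸ (isReduced_of_forall_snd_eq_true ?_).toWord_mk⟩
    simp only [List.cons_append, List.mem_cons, List.mem_append, List.mem_replicate]
    grind
  induction s with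
  | zero => exact ⟨[], by simp, by simp [W, of, pow_mk, mul_mk]⟩
  | succ s ih =>
    obtain ⟨R, hR, hW⟩ := ih
    refine ⟨R ++ (x, true) :: List.replicate (5 + s) (y, true), ?_, ?_⟩
    · simp only [List.mem_append, List.mem_cons, List.mem_replicate]
      grind
    · rw [W_succ, hW, of, of, pow_mk, List.flatten_replicate_singleton, mul_mk, mul_mk]
      simp

end W

section AscendingUnion

variable {G : Type*} [Group G]

theorem pairwise_disjoint_on_two {α : Type*} [PartialOrder α] [OrderBot α] {x y : α}
    (h : Disjoint x y) : Pairwise (Function.onFun Disjoint ![x, y]) :=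
  Fin.forall_fin_two.2 ⟨Fin.forall_fin_two.2 ⟨absurd rfl, fun _ => h⟩,
    Fin.forall_fin_two.2 ⟨fun _ => h.symm, absurd rfl⟩⟩

theorem Subgroup.isFreeGroup_of_le {K L : Subgroup G} [IsFreeGroup L] (h : K ≤ L) :
    IsFreeGroup K :=
  IsFreeGroup.ofMulEquiv (Subgroup.subgroupOfEquivOfLe h)

theorem Subgroup.FG.map {H : Type*} [Group H] {K : Subgroup G} (hK : K.FG) (f : G →* H) :
    (K.map f).FG :=
  (Subgroup.fg_iff_submonoid_fg _).2 (((Subgroup.fg_iff_submonoid_fg K).1 hK).map f)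

theorem Subgroup.exists_le_of_fg_of_le_iSup {A : ℕ → Subgroup G} (hA : Monotone A)
    {K : Subgroup G} (hK : K.FG) (hle : K ≤ ⨆ n, A n) : ∃ n, K ≤ A n := by
  obtain ⟨S, rfl⟩ := hK
  have hmem : ∀ x ∈ S, ∃ n, x ∈ A n := fun x hx =>
    (Subgroup.mem_iSup_of_directed hA.directed_le).1 (hle (Subgroup.subset_closure hx))
  choose! f hf using hmem
  exact ⟨S.sup f, (Subgroup.closure_le _).2 fun x hx => hA (Finset.le_sup hx) (hf x hx)⟩

theorem Monotone.isFreeGroup_of_fg_subgroup_iSup {A : ℕ → Subgroup G} (hA : Monotone A)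
    [∀ n, IsFreeGroup (A n)] (K : Subgroup ↥(⨆ n, A n)) (hK : K.FG) : IsFreeGroup K := by
  obtain ⟨n, hn⟩ := Subgroup.exists_le_of_fg_of_le_iSup hA (hK.map (⨆ n, A n).subtype)
    (Subgroup.map_subtype_le K)
  have := Subgroup.isFreeGroup_of_le hn
  exact IsFreeGroup.ofMulEquiv (K.equivMapOfInjective _ (Subgroup.subtype_injective _)).symm

/-- A free group in which every finite subset lies in the image of `FreeGroup ι` has finite
rank: abelianize and tensor with `ℚ`, where such images have dimension at most `|ι|`. -/
theorem IsFreeGroup.finite_generators_of_forall_finset {H : Type*} [Group H] [IsFreeGroup H]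
    {ι : Type*} [Finite ι] (h : ∀ S : Finset H, ∃ f : FreeGroup ι →* H, ↑S ⊆ Set.range f) :
    Finite (IsFreeGroup.Generators H) := by
  classical
  have := Fintype.ofFinite ι
  set X := IsFreeGroup.Generators H
  let ψ : H →* Multiplicative (X →₀ ℚ) :=
    IsFreeGroup.lift fun x => Multiplicative.ofAdd (Finsupp.single x 1)
  have hcard : ∀ T : Finset X, T.card ≤ Fintype.card ι := by
    intro T
    obtain ⟨f, hf⟩ := h (T.image IsFreeGroup.of)
    let w : ι → X →₀ ℚ := fun i => (ψ (f (FreeGroup.of i))).toAdd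
    have hspan : ∀ y, (ψ (f y)).toAdd ∈ Submodule.span ℚ (Set.range w) := by
      intro y
      induction y using FreeGroup.induction_on with
      | C1 => simp
      | of i => exact Submodule.subset_span ⟨i, rfl⟩
      | inv_of i hi => simpa using neg_mem hi
      | mul y z hy hz => simpa using add_mem hy hz
    let v : T → X →₀ ℚ := fun x => Finsupp.single x 1
    have hv : LinearIndependent ℚ v :=
      (Finsupp.linearIndependent_single_one ℚ X).comp _ Subtype.val_injective
    have hle : Submodule.span ℚ (Set.range v) ≤ Submodule.span ℚ (Set.range w) := by
      refine Submodule.span_le.2 ?_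
      rintro _ ⟨x, rfl⟩
      obtain ⟨y, hy⟩ := hf (Finset.mem_image_of_mem _ x.2)
      have := hspan y
      rwa [hy, IsFreeGroup.lift_of] at this
    have := FiniteDimensional.span_of_finite ℚ (Set.finite_range w)
    calc T.card = Module.finrank ℚ (Submodule.span ℚ (Set.range v)) := by
          rw [finrank_span_eq_card hv, Fintype.card_coe]
      _ ≤ Module.finrank ℚ (Submodule.span ℚ (Set.range w)) := Submodule.finrank_mono hle
      _ ≤ Fintype.card ι := finrank_range_le_card w
  by_contra hinf
  rw [not_finite_iff_infinite] at hinf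
  obtain ⟨T, hT⟩ := Infinite.exists_subset_card_eq X (Fintype.card ι + 1)
  exact absurd (hcard T) (by omega)

theorem StrictMono.not_isFreeGroup_iSup {ι : Type*} [Finite ι] {A : ℕ → Subgroup G}
    (hA : StrictMono A) (e : ∀ n, FreeGroup ι ≃* A n) : ¬ IsFreeGroup ↥(⨆ n, A n) := by
  intro hfree
  have hrange : ∀ S : Finset ↥(⨆ n, A n),
      ∃ f : FreeGroup ι →* ↥(⨆ n, A n), ↑S ⊆ Set.range f := by
    intro S
    obtain ⟨n, hn⟩ := Subgroup.exists_le_of_fg_of_le_iSup hA.monotone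
      (Subgroup.FG.map ⟨S, rfl⟩ (⨆ n, A n).subtype)
      (Subgroup.map_subtype_le _)
    refine ⟨(Subgroup.inclusion (le_iSup A n)).comp (e n).toMonoidHom, fun x hx => ?_⟩
    exact ⟨(e n).symm ⟨x, hn ⟨x, Subgroup.subset_closure hx, rfl⟩⟩, by simp; rfl⟩
  have := IsFreeGroup.finite_generators_of_forall_finset hrange
  have hfg : Group.FG ↥(⨆ n, A n) :=
    Group.fg_of_surjective (f := (IsFreeGroup.toFreeGroup ↥(⨆ n, A n)).symm.toMonoidHom)
      (IsFreeGroup.toFreeGroup _).symm.surjective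
  obtain ⟨n, hn⟩ := Subgroup.exists_le_of_fg_of_le_iSup hA.monotone
    ((Group.fg_iff_subgroup_fg _).1 hfg) le_rfl
  exact (hA n.lt_succ_self).not_ge ((le_iSup A (n + 1)).trans hn)

end AscendingUnion

namespace Gs

section Substitution

open FreeGroup
open scoped Pointwise

abbrev a : FreeGroup (Fin 2) := of 0
abbrev b : FreeGroup (Fin 2) := of 1

def c (s : ℕ) : FreeGroup (Fin 2) := W s b a * b * (W s a b)⁻¹

theorem exists_toWord_c (s : ℕ) :
    ∃ M, (c s).toWord =
      (1, true) :: List.replicate 4 (0, true) ++ M ++ List.replicate 4 (1, false) ++ [(0, false)] := by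
  obtain ⟨R₁, hR₁, h₁⟩ := exists_toWord_W s (1 : Fin 2) 0
  obtain ⟨R₂, -, h₂⟩ := exists_toWord_W s (0 : Fin 2) 1
  have hpos : IsReduced ((W s b a).toWord ++ [(1, true)]) := by
    refine isReduced_of_forall_snd_eq_true ?_
    simp only [h₁, List.cons_append, List.mem_append, List.mem_cons, List.mem_replicate]
    grind
  have hc : c s = mk ((W s b a).toWord ++ [(1, true)]) * (W s a b)⁻¹ := by
    rw [c, ← mul_mk, mk_toWord]
    rfl
  refine ⟨R₁ ++ [(1, true), (1, true), (0, false)] ++ invRev R₂, ?_⟩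
  rw [hc, toWord_mk_mul, toWord_inv, h₁, h₂]
  · simp [invRev]
  have hhead : (W s a b)⁻¹.toWord.head? = some (0, false) := by simp [toWord_inv, h₂, invRev]
  refine hpos.append isReduced_toWord fun x hx y hy => ?_
  rw [List.getLast?_concat, Option.mem_some_iff] at hx
  rw [hhead, Option.mem_some_iff] at hy
  simp [← hx, ← hy]

-- `ρ w` lies in `Xb`, `Yb`, `Xc` or `Yc` according as the reduced word `w` begins with `a`, `a⁻¹`,
-- `b` or `b⁻¹`.
def Xb : Set (FreeGroup (Fin 2)) :=
  prefixedBy [(1, true)] \ prefixedBy ((1, true) :: List.replicate 3 (0, true))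
def Yb : Set (FreeGroup (Fin 2)) := prefixedBy [(1, false)] ∪ prefixedBy [(0, true), (0, true)]
def Xc : Set (FreeGroup (Fin 2)) := prefixedBy ((1, true) :: List.replicate 3 (0, true))
def Yc : Set (FreeGroup (Fin 2)) := prefixedBy ((0, true) :: List.replicate 3 (1, true))

theorem b_smul_compl_Yb : b • Ybᶜ ⊆ Xb := by
  refine Set.smul_set_subset_iff.2 fun v hv => ?_
  simp only [Yb, Set.mem_compl_iff, Set.mem_union, not_or] at hv
  have hw : (b * v).toWord = (1, true) :: v.toWord := toWord_mk_replicate_mul 1 hv.1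
  show [(1, true)] <+: (b * v).toWord ∧ ¬ _ <+: (b * v).toWord
  rw [hw]
  refine ⟨List.cons_prefix_cons.2 ⟨rfl, List.nil_prefix⟩, fun h => hv.2 ?_⟩
  exact (show [((0 : Fin 2), true), (0, true)] <+: List.replicate 3 (0, true) by decide).trans
    (List.cons_prefix_cons.1 h).2

theorem inv_b_smul_compl_Xb : b⁻¹ • Xbᶜ ⊆ Yb := by
  refine Set.smul_set_subset_iff.2 fun v hv => ?_
  simp only [Xb, Set.mem_compl_iff, Set.mem_sdiff, not_and, not_not] at hv
  by_cases hb : [(1, true)] <+: v.toWord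
  · obtain ⟨w, hw⟩ := hv hb
    refine Or.inr ?_
    show _ <+: ((mk [(1, true)])⁻¹ * v).toWord
    rw [toWord_inv_mk_mul (M := List.replicate 3 (0, true) ++ w) hw.symm]
    exact (show [((0 : Fin 2), true), (0, true)] <+: List.replicate 3 (0, true) by decide).trans
      (List.prefix_append _ _)
  · refine Or.inl ?_
    show _ <+: (mk (List.replicate 1 (1, false)) * v).toWord
    rw [toWord_mk_replicate_mul 1 hb]
    exact List.cons_prefix_cons.2 ⟨rfl, List.nil_prefix⟩

theorem c_smul_compl_Yc (s : ℕ) : c s • Ycᶜ ⊆ Xc := by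
  obtain ⟨M, hM⟩ := exists_toWord_c s
  refine Set.smul_set_subset_iff.2 fun v hv => ?_
  exact (List.prefix_append _ _).trans (isPrefix_toWord_mul (n := 3) hM hv)

theorem inv_c_smul_compl_Xc (s : ℕ) : (c s)⁻¹ • Xcᶜ ⊆ Yc := by
  obtain ⟨M, hM⟩ := exists_toWord_c s
  have hM' : (c s)⁻¹.toWord = (0, true) :: List.replicate 4 (1, true) ++ invRev M ++
      List.replicate 4 (0, false) ++ [(1, false)] := by
    simp [toWord_inv, hM, invRev]
  refine Set.smul_set_subset_iff.2 fun v hv => ?_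
  exact (List.prefix_append _ _).trans (isPrefix_toWord_mul (n := 3) hM' hv)

def ρ (s : ℕ) : FreeGroup (Fin 2) →* FreeGroup (Fin 2) := FreeGroup.lift ![b, c s]

theorem ρ_a (s : ℕ) : ρ s a = b := by simp [ρ]

theorem ρ_b (s : ℕ) : ρ s b = c s := by simp [ρ]

theorem ρ_injective (s : ℕ) : Function.Injective (ρ s) := by
  have hX : ∀ i, ![b, c s] i • (![Yb, Yc] i)ᶜ ⊆ ![Xb, Xc] i :=
    Fin.forall_fin_two.2 ⟨b_smul_compl_Yb, c_smul_compl_Yc s⟩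
  have hone : ∀ i, 1 ∈ (![Yb, Yc] i)ᶜ := Fin.forall_fin_two.2 ⟨by simp [Yb, prefixedBy],
    by simp [Yc, prefixedBy]⟩
  have hXsub : ∀ i, ![Xb, Xc] i ⊆ prefixedBy [(1, true)] :=
    Fin.forall_fin_two.2 ⟨Set.sdiff_subset, prefixedBy_anti (by decide)⟩
  have hYsub : ∀ i, ![Yb, Yc] i ⊆ prefixedBy [(1, false)] ∪ prefixedBy [(0, true)] :=
    Fin.forall_fin_two.2 ⟨Set.union_subset_union_right _ (prefixedBy_anti (by decide)),
      (prefixedBy_anti (by decide)).trans Set.subset_union_right⟩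
  refine FreeGroup.injective_lift_of_ping_pong _ _ _
    (fun i => ⟨_, hX i (Set.smul_mem_smul_set (hone i))⟩)
    (pairwise_disjoint_on_two Set.disjoint_sdiff_left)
    (pairwise_disjoint_on_two (Disjoint.union_left (disjoint_prefixedBy (by decide) (by decide))
      (disjoint_prefixedBy (by decide) (by decide))))
    (fun i j => ?_) hX (Fin.forall_fin_two.2 ⟨inv_b_smul_compl_Xb, inv_c_smul_compl_Xc s⟩)
  exact (Disjoint.union_right (disjoint_prefixedBy (by decide) (by decide))
    (disjoint_prefixedBy (by decide) (by decide))).mono (hXsub i) (hYsub j)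

end Substitution

theorem a_notMem_range_ρ (s : ℕ) : a ∉ (ρ s).range := by
  set N := ∑ i ∈ Finset.range (s + 1), (4 + i)
  have hN : (s + 1) * 4 ≤ N := by
    simpa using Finset.card_nsmul_le_sum (Finset.range (s + 1)) (fun i => 4 + i) 4 (by simp)
  -- the exponent sums of `a` and of `b`
  let χ : FreeGroup (Fin 2) →* Multiplicative ℤ := FreeGroup.lift ![Multiplicative.ofAdd 1, 1]
  let β : FreeGroup (Fin 2) →* Multiplicative ℤ := FreeGroup.lift ![1, Multiplicative.ofAdd 1]
  have hχρ : χ.comp (ρ s) = (zpowGroupHom ((N : ℤ) - (s + 2))).comp β := by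
    refine FreeGroup.ext_hom _ _ (Fin.forall_fin_two.2 ⟨by simp [ρ_a, χ, β], ?_⟩)
    apply Multiplicative.toAdd.injective
    simp only [MonoidHom.comp_apply, ρ_b, c, map_mul, map_inv, map_W, W_eq_of_comm, χ, β,
      FreeGroup.lift_apply_of, Matrix.cons_val_zero, Matrix.cons_val_one, one_pow, mul_one,
      zpowGroupHom_apply, toAdd_mul, toAdd_inv, toAdd_pow, toAdd_zpow, toAdd_ofAdd, toAdd_one,
      nsmul_eq_mul, zsmul_eq_mul, N]
    push_cast
    ring
  rintro ⟨w, hw⟩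
  have h : (Multiplicative.ofAdd 1 : Multiplicative ℤ) = β w ^ ((N : ℤ) - (s + 2)) := by
    simpa [hw, χ] using DFunLike.congr_fun hχρ w
  have h' : ((N : ℤ) - (s + 2)) * Multiplicative.toAdd (β w) = 1 := by
    simpa using (congrArg Multiplicative.toAdd h).symm
  rcases Int.eq_one_or_neg_one_of_mul_eq_one h' with h1 | h1 <;> omega

def toGs (s : ℕ) : FreeGroup (Fin 2) →* PresentedGroup (gsrels s) :=
  FreeGroup.lift ![PresentedGroup.of 0, PresentedGroup.of 1]

abbrev t (s : ℕ) : PresentedGroup (gsrels s) := PresentedGroup.of 2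

theorem toGs_a (s : ℕ) : toGs s a = PresentedGroup.of 0 := by simp [toGs]

theorem toGs_b (s : ℕ) : toGs s b = PresentedGroup.of 1 := by simp [toGs]

theorem inv_t_mul_toGs_mul_t (s : ℕ) (g : FreeGroup (Fin 2)) :
    (t s)⁻¹ * toGs s g * t s = toGs s (ρ s g) := by
  have h₁ : (t s)⁻¹ * PresentedGroup.of 0 * t s = PresentedGroup.of 1 :=
    mul_inv_eq_one.1 (PresentedGroup.one_of_mem (Set.mem_insert _ _))
  have h₂ : (t s)⁻¹ * PresentedGroup.of 1 * t s =
      W s (PresentedGroup.of 1) (PresentedGroup.of 0) * PresentedGroup.of 1 *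
        (W s (PresentedGroup.of 0) (PresentedGroup.of 1))⁻¹ := by
    have h := PresentedGroup.one_of_mem (rels := gsrels s) (Set.mem_insert_of_mem _ rfl)
    simp only [map_mul, map_inv, map_W] at h
    exact mul_inv_eq_one.1 h
  suffices (MulAut.conj (t s)⁻¹).toMonoidHom.comp (toGs s) = (toGs s).comp (ρ s) by
    simpa using DFunLike.congr_fun this g
  refine FreeGroup.ext_hom _ _ (Fin.forall_fin_two.2 ⟨?_, ?_⟩)
  · simpa [ρ_a, toGs_a, toGs_b] using h₁
  · simpa [ρ_b, c, map_W, toGs_a, toGs_b] using h₂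

abbrev HNN (s : ℕ) : Type :=
  HNNExtension (FreeGroup (Fin 2)) ⊤ (ρ s).range
    (Subgroup.topEquiv.trans (MonoidHom.ofInjective (ρ_injective s)))

theorem HNN.t_mul_of_mul_inv_t (s : ℕ) (g : FreeGroup (Fin 2)) :
    (HNNExtension.t : HNN s) * HNNExtension.of g * HNNExtension.t⁻¹ = HNNExtension.of (ρ s g) :=
  (HNNExtension.equiv_eq_conj (⟨g, Subgroup.mem_top g⟩ : (⊤ : Subgroup _))).symm

-- `t ↦ t⁻¹`, because the defining relation of `HNNExtension` is `t g t⁻¹ = φ g`.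
noncomputable def toHNN (s : ℕ) : PresentedGroup (gsrels s) →* HNN s :=
  PresentedGroup.toGroup (f := ![HNNExtension.of a, HNNExtension.of b, HNNExtension.t⁻¹]) <| by
    rintro r (rfl | rfl) <;> simp only [map_mul, map_inv, map_W, FreeGroup.lift_apply_of,
      mul_inv_eq_one, Matrix.cons_val, inv_inv, HNN.t_mul_of_mul_inv_t]
    · rw [ρ_a]
    · rw [ρ_b, c, map_mul, map_mul, map_inv, map_W, map_W]

theorem toGs_injective (s : ℕ) : Function.Injective (toGs s) := by
  have h : (toHNN s).comp (toGs s) = (HNNExtension.of : FreeGroup (Fin 2) →* HNN s) := by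
    refine FreeGroup.ext_hom _ _ fun i => ?_
    fin_cases i <;> simp [toHNN, toGs]
  refine Function.Injective.of_comp (f := toHNN s) ?_
  change Function.Injective ((toHNN s).comp (toGs s))
  rw [h]
  exact HNNExtension.of_injective _

def A (s n : ℕ) : Subgroup (PresentedGroup (gsrels s)) :=
  ((MulAut.conj (t s ^ n)).toMonoidHom.comp (toGs s)).range

noncomputable def equivA (s n : ℕ) : FreeGroup (Fin 2) ≃* A s n :=
  MonoidHom.ofInjective ((MulAut.conj (t s ^ n)).injective.comp (toGs_injective s))

theorem strictMono_A (s : ℕ) : StrictMono (A s) := by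
  refine strictMono_nat_of_lt_succ fun n => lt_of_le_not_ge ?_ fun h => ?_
  · rintro _ ⟨g, rfl⟩
    refine ⟨ρ s g, ?_⟩
    simp only [MonoidHom.comp_apply, MulEquiv.coe_toMonoidHom, MulAut.conj_apply,
      ← inv_t_mul_toGs_mul_t]
    group
  · obtain ⟨g, hg⟩ := h ⟨a, rfl⟩
    simp only [MonoidHom.comp_apply, MulEquiv.coe_toMonoidHom, MulAut.conj_apply] at hg
    refine a_notMem_range_ρ s ⟨g, toGs_injective s ?_⟩
    rw [← inv_t_mul_toGs_mul_t]
    rw [pow_succ, mul_inv_rev] at hg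
    simp only [mul_assoc, mul_right_inj] at hg
    simp only [← mul_assoc, mul_left_inj] at hg
    rw [hg]
    group

end Gs

theorem stmt_17_general (s : ℕ) :
    ∃ H : Subgroup (PresentedGroup (gsrels s)),
      (∀ K : Subgroup H, K.FG → IsFreeGroup K) ∧ ¬ IsFreeGroup H := by
  have := fun n => IsFreeGroup.ofMulEquiv (Gs.equivA s n)
  exact ⟨⨆ n, Gs.A s n, (Gs.strictMono_A s).monotone.isFreeGroup_of_fg_subgroup_iSup,
    (Gs.strictMono_A s).not_isFreeGroup_iSup (Gs.equivA s)⟩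

theorem stmt_17 (s : ℕ) (hs : 3 ≤ s) :
    ∃ H : Subgroup (PresentedGroup (gsrels s)),
      (∀ K : Subgroup H, K.FG → IsFreeGroup K) ∧ ¬ IsFreeGroup H :=
  stmt_17_general s
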